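/- arXiv:1804.11103 — 5 statements merged into one kernel-verified Lean document; each statement's English description precedes it below -/
import Mathlib

section
/- The natural right action of the free group F_n (n ≥ 2) on the set of coset partitions of F_n by finite-index subgroups, given by (H_i α_i)_{i=1..s} · w = (H_i α_i w)_{i=1..s}, is faithful: if w ∈ F_n satisfies P · w = P for every such coset partition P, then w = 1. -/
/-- The right coset `Hα = {hα : h ∈ H}` of a subgroup `H`. -/
def rcoset {G : Type*} [Group G] (H : Subgroup G) (α : G) : Set G := {g | g * α⁻¹ ∈ H}

/-- `{H_i α_i}` is a coset partition of `G`: every element lies in exactly one coset. -/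
def IsCosetPartition {G : Type*} [Group G] {s : ℕ} (H : Fin s → Subgroup G)
    (α : Fin s → G) : Prop :=
  ∀ g : G, ∃! i : Fin s, g ∈ rcoset (H i) (α i)

/-!
If `w` fixes every coset partition, it lies in every finite-index subgroup `N`. Indeed, in an
infinite residually finite group `N` contains a smaller finite-index subgroup `K` (intersect `N`
with a finite-index subgroup missing some `x ∈ N`, `x ≠ 1`). Split the group into `N` and the
right cosets of `K` outside `N`: the piece `Nw` of the translated partition is one of these
pieces, it is not a coset of `K` because a right coset determines its subgroup, so `Nw = N`.
Residual finiteness then forces `w = 1`.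

Free groups are residually finite: for a nonempty reduced word `x₀ ⋯ x_{k-1}`, let every
generator act on `{0, …, k}` so that the letter `x_j` moves `j + 1` to `j`. These requirements
define a partial injection for each generator (two of them clash only at a cancelling pair
`x_j x_{j+1}`), which extends to a permutation, and the word then moves `k` to `0`.
-/

open Function Equiv

theorem exists_perm_comp_eq_of_injective {ι α : Type*} [Finite α] {s t : ι → α}
    (hs : Injective s) (ht : Injective t) : ∃ σ : Perm α, σ ∘ s = t := by
  classical
  refine ⟨((Equiv.ofInjective s hs).symm.trans (Equiv.ofInjective t ht)).extendSubtype,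
    funext fun i => ?_⟩
  simp [extendSubtype_apply_of_mem _ _ (Set.mem_range_self i)]

namespace FreeGroup

variable {α : Type*} {L : List (α × Bool)}

theorem IsReduced.eq_of_add_eq (hL : IsReduced L) {i j : Fin L.length} (hij : L[i].1 = L[j].1)
    {δ : Bool → ℕ} (hδ : ∀ b, δ b ≤ 1) (h : i + δ L[i].2 = j + δ L[j].2) : i = j := by
  have adjacent {i j : Fin L.length} (hij : L[i].1 = L[j].1) (h : i + δ L[i].2 = j + δ L[j].2)
      (hlt : i < j) : False := by
    have hj : (j : ℕ) = i + 1 := by have := hδ L[i].2; omega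
    have hsnd : L[i].2 = L[j].2 := by
      simp only [Fin.getElem_fin, hj] at hij ⊢
      exact List.IsChain.getElem hL i (hj ▸ j.2) hij
    rw [hsnd] at h
    omega
  rcases lt_trichotomy i j with hlt | heq | hgt
  · exact (adjacent hij h hlt).elim
  · exact heq
  · exact (adjacent hij.symm h.symm hgt).elim

/-- A generator `a` is to send `wordEdgeSource L j` to `wordEdgeTarget L j` whenever
`L[j].1 = a`; this makes the letter `L[j] = a^{±1}` move `j + 1` to `j`. -/
def wordEdgeSource (L : List (α × Bool)) (j : Fin L.length) : Fin (L.length + 1) :=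
  ⟨j + L[j].2.toNat, by have := Bool.toNat_le L[j].2; omega⟩

def wordEdgeTarget (L : List (α × Bool)) (j : Fin L.length) : Fin (L.length + 1) :=
  ⟨j + (!L[j].2).toNat, by have := Bool.toNat_le (!L[j].2); omega⟩

theorem IsReduced.exists_perm_wordEdgeSource (hL : IsReduced L) (a : α) :
    ∃ σ : Perm (Fin (L.length + 1)), ∀ j : Fin L.length, L[j].1 = a →
      σ (wordEdgeSource L j) = wordEdgeTarget L j := by
  obtain ⟨σ, hσ⟩ := exists_perm_comp_eq_of_injective
    (s := fun j : {j : Fin L.length // L[j].1 = a} => wordEdgeSource L j)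
    (t := fun j => wordEdgeTarget L j)
    (fun i j h => Subtype.ext <| hL.eq_of_add_eq (i.2.trans j.2.symm) Bool.toNat_le
      (Fin.val_eq_of_eq h))
    (fun i j h => Subtype.ext <| hL.eq_of_add_eq (δ := fun b => (!b).toNat)
      (i.2.trans j.2.symm) (fun _ => Bool.toNat_le _) (Fin.val_eq_of_eq h))
  exact ⟨σ, fun j hj => congrFun hσ ⟨j, hj⟩⟩

theorem IsReduced.exists_hom_perm_apply_last (hL : IsReduced L) :
    ∃ φ : FreeGroup α →* Perm (Fin (L.length + 1)), φ (mk L) (Fin.last _) = 0 := by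
  choose σ hσ using hL.exists_perm_wordEdgeSource
  have step (j : Fin L.length) : lift σ (mk [L[j]]) j.succ = j.castSucc := by
    have hσj := hσ L[j].1 j rfl
    simp only [lift_mk, List.map_cons, List.map_nil, List.prod_singleton]
    cases hb : L[j].2
    · have hs : wordEdgeSource L j = j.castSucc := by
        ext; simp only [wordEdgeSource, hb]; simp
      have ht : wordEdgeTarget L j = j.succ := by
        ext; simp only [wordEdgeTarget, hb]; simp
      rw [hs, ht] at hσj
      exact Perm.inv_eq_iff_eq.mpr hσj.symm
    · have hs : wordEdgeSource L j = j.succ := by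
        ext; simp only [wordEdgeSource, hb]; simp
      have ht : wordEdgeTarget L j = j.castSucc := by
        ext; simp only [wordEdgeTarget, hb]; simp
      rwa [hs, ht] at hσj
  have prefix_apply (m : ℕ) (hm : m ≤ L.length) :
      lift σ (mk (L.take m)) ⟨m, by omega⟩ = 0 := by
    induction m with
    | zero => rfl
    | succ m ih =>
      rw [List.take_add_one, List.getElem?_eq_getElem (by omega), Option.toList_some, ← mul_mk,
        _root_.map_mul, Perm.mul_apply]
      exact (congrArg _ (step ⟨m, by omega⟩)).trans (ih (by omega))
  exact ⟨lift σ, by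
    have := prefix_apply L.length le_rfl
    rwa [List.take_length] at this⟩

instance instResiduallyFinite : Group.ResiduallyFinite (FreeGroup α) := by
  classical
  refine Group.residuallyFinite_iff_exists_finiteIndex.mpr fun w hw => ?_
  obtain ⟨φ, hφ⟩ := (isReduced_toWord (x := w)).exists_hom_perm_apply_last
  refine ⟨φ.ker, inferInstance, fun hker => ?_⟩
  have hlen : w.toWord.length ≠ 0 := by simpa [toWord_eq_nil_iff] using hw
  rw [mk_toWord, (MonoidHom.mem_ker).mp hker] at hφ
  exact hlen (by simpa [Fin.ext_iff] using hφ)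

end FreeGroup

section CosetPartitions

variable {G : Type*} [Group G]

theorem eq_of_rcoset_eq {H K : Subgroup G} {α β : G} (h : rcoset H α = rcoset K β) : H = K := by
  have hαβ : α * β⁻¹ ∈ K := by
    have hα : α ∈ rcoset H α := by simp [rcoset]
    rwa [h] at hα
  ext x
  have hx : x ∈ H ↔ x * α ∈ rcoset K β := by rw [← h]; simp [rcoset]
  rw [hx]
  simp only [rcoset, Set.mem_ofPred_eq, mul_assoc, K.mul_mem_cancel_right hαβ]

theorem mem_rcoset_out_iff {K : Subgroup G} (g : G) (q : Quotient (QuotientGroup.rightRel K)) :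
    g ∈ rcoset K q.out ↔ ⟦g⟧ = q := by
  conv_rhs => rw [eq_comm, ← q.out_eq, Quotient.eq, QuotientGroup.rightRel_apply]
  rfl

def ActsTriviallyOnCosetPartitions (w : G) : Prop :=
  ∀ (s : ℕ) (H : Fin s → Subgroup G) (α : Fin s → G),
    (∀ i, (H i).FiniteIndex) → IsCosetPartition H α →
    (Set.range fun i => rcoset (H i) (α i * w)) = Set.range fun i => rcoset (H i) (α i)

theorem ActsTriviallyOnCosetPartitions.range_eq {w : G} (hw : ActsTriviallyOnCosetPartitions w)
    {ι : Type*} [Finite ι] (H : ι → Subgroup G) (α : ι → G) (hH : ∀ i, (H i).FiniteIndex)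
    (hpart : ∀ g, ∃! i, g ∈ rcoset (H i) (α i)) :
    (Set.range fun i => rcoset (H i) (α i * w)) = Set.range fun i => rcoset (H i) (α i) := by
  obtain ⟨s, ⟨e⟩⟩ := Finite.exists_equiv_fin ι
  have := hw s (H ∘ e.symm) (α ∘ e.symm) (fun i => hH _)
    (fun g => (e.existsUnique_congr_left).mp (hpart g))
  rwa [← e.symm.surjective.range_comp (fun i => rcoset (H i) (α i * w)),
    ← e.symm.surjective.range_comp (fun i => rcoset (H i) (α i))]

noncomputable def nestedCosetPartition (K N : Subgroup G) :
    Option {q : Quotient (QuotientGroup.rightRel K) // q.out ∉ N} → Subgroup G × G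
  | none => (N, 1)
  | some q => (K, q.1.out)

theorem existsUnique_mem_nestedCosetPartition {K N : Subgroup G} (hKN : K ≤ N) (g : G) :
    ∃! o, g ∈ rcoset (nestedCosetPartition K N o).1 (nestedCosetPartition K N o).2 := by
  have out_mem_iff {q : Quotient (QuotientGroup.rightRel K)} (hq : ⟦g⟧ = q) :
      q.out ∈ N ↔ g ∈ N := by
    have hgq : g * q.out⁻¹ ∈ N := hKN ((mem_rcoset_out_iff g q).mpr hq)
    exact ⟨fun h => by simpa using N.mul_mem hgq h,
      fun h => by simpa using N.mul_mem (N.inv_mem hgq) h⟩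
  by_cases hg : g ∈ N
  · refine ⟨none, by simpa [nestedCosetPartition, rcoset] using hg, ?_⟩
    rintro (_ | q) hq
    · rfl
    · exact (q.2 ((out_mem_iff ((mem_rcoset_out_iff g q.1).mp hq)).mpr hg)).elim
  · refine ⟨some ⟨⟦g⟧, fun h => hg ((out_mem_iff rfl).mp h)⟩,
      (mem_rcoset_out_iff g _).mpr rfl, ?_⟩
    rintro (_ | q) hq
    · exact (hg (by simpa [nestedCosetPartition, rcoset] using hq)).elim
    · exact congrArg some (Subtype.ext ((mem_rcoset_out_iff g q.1).mp hq).symm)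

theorem ActsTriviallyOnCosetPartitions.mem_of_lt {w : G} (hw : ActsTriviallyOnCosetPartitions w)
    {K N : Subgroup G} [K.FiniteIndex] (hKN : K < N) : w ∈ N := by
  have : Finite (Quotient (QuotientGroup.rightRel K)) :=
    Finite.of_equiv _ (QuotientGroup.quotientRightRelEquivQuotientLeftRel K).symm
  have : N.FiniteIndex := Subgroup.finiteIndex_of_le hKN.le
  have hrange := hw.range_eq (fun o => (nestedCosetPartition K N o).1)
    (fun o => (nestedCosetPartition K N o).2) (by rintro (_ | _) <;> assumption)
    (existsUnique_mem_nestedCosetPartition hKN.le)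
  have hNw : rcoset N w ∈ Set.range fun o =>
      rcoset (nestedCosetPartition K N o).1 ((nestedCosetPartition K N o).2 * w) :=
    ⟨none, by simp [nestedCosetPartition]⟩
  rw [hrange] at hNw
  obtain ⟨_ | q, hq⟩ := hNw
  · have hwN : w ∈ rcoset N w := by simp [rcoset]
    rw [← hq] at hwN
    simpa [nestedCosetPartition, rcoset] using hwN
  · exact (hKN.ne (eq_of_rcoset_eq hq)).elim

theorem Subgroup.exists_finiteIndex_lt [Infinite G] [Group.ResiduallyFinite G] (N : Subgroup G)
    [N.FiniteIndex] : ∃ K : Subgroup G, K.FiniteIndex ∧ K < N := by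
  have hN : N ≠ ⊥ := by
    rintro rfl
    exact Subgroup.FiniteIndex.index_ne_zero (H := (⊥ : Subgroup G))
      (by rw [Subgroup.index_bot, Nat.card_eq_zero_of_infinite])
  obtain ⟨x, hxN, hx⟩ := N.bot_or_exists_ne_one.resolve_left hN
  obtain ⟨M, hM, hxM⟩ := Group.residuallyFinite_iff_exists_finiteIndex.mp ‹_› x hx
  exact ⟨N ⊓ M, inferInstance, inf_le_left.lt_of_not_ge fun h => hxM (h hxN).2⟩

theorem ActsTriviallyOnCosetPartitions.eq_one [Infinite G] [Group.ResiduallyFinite G] {w : G}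
    (hw : ActsTriviallyOnCosetPartitions w) : w = 1 :=
  Group.residuallyFinite_iff_forall_finiteIndex.mp ‹_› w fun N _ =>
    let ⟨_, _, hKN⟩ := N.exists_finiteIndex_lt
    hw.mem_of_lt hKN

end CosetPartitions

/-- The natural right action of `F_n` (`n ≥ 2`) on the set of coset partitions of `F_n`
by finite-index subgroups, `{H_i α_i} · w = {H_i α_i w}`, is faithful. -/
theorem faithful_action_on_coset_partitions (n : ℕ) (hn : 2 ≤ n) (w : FreeGroup (Fin n))
    (hw : ∀ (s : ℕ) (H : Fin s → Subgroup (FreeGroup (Fin n)))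
      (α : Fin s → FreeGroup (Fin n)),
      (∀ i, (H i).FiniteIndex) → IsCosetPartition H α →
      (Set.range fun i => rcoset (H i) (α i * w)) = Set.range fun i => rcoset (H i) (α i)) :
    w = 1 := by
  have : Nonempty (Fin n) := ⟨⟨0, by omega⟩⟩
  exact ActsTriviallyOnCosetPartitions.eq_one hw
end

section
/- Let {H_i α_i}_{i=1}^s be a coset partition of a group G with each H_i of finite index. If there exist indices j ≠ k such that the intersection ⋂_{i=1}^s α_i^{-1} H_i α_i is strictly contained in ⋂_{i ≠ j,k} α_i^{-1} H_i α_i, then H_j = H_k. -/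
/-- If in a coset partition `{H_i α_i}` of `G` the intersection `⋂_{i} α_i⁻¹ H_i α_i` is
strictly contained in `⋂_{i ≠ j,k} α_i⁻¹ H_i α_i`, then `H_j = H_k`. -/
theorem eq_subgroups_of_ssubset_inter (G : Type*) [Group G] {s : ℕ}
    (H : Fin s → Subgroup G) (α : Fin s → G)
    (hfi : ∀ i, (H i).FiniteIndex) (hd : ∀ i, 1 < (H i).index)
    (hpart : IsCosetPartition H α) (j k : Fin s) (hjk : j ≠ k)
    (hss : {g : G | ∀ i, α i * g * (α i)⁻¹ ∈ H i} ⊂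
      {g : G | ∀ i, i ≠ j → i ≠ k → α i * g * (α i)⁻¹ ∈ H i}) :
    H j = H k := by
  obtain ⟨w, hwB, hwA⟩ := Set.exists_of_ssubset hss
  simp only [Set.mem_setOf_eq] at hwB hwA
  -- L1: if all indices except j0 are good for w, then j0 is good too.
  have L1 : ∀ j0 : Fin s, (∀ i, i ≠ j0 → α i * w * (α i)⁻¹ ∈ H i) →
      α j0 * w * (α j0)⁻¹ ∈ H j0 := by
    intro j0 hgood
    obtain ⟨i, hi, -⟩ := hpart (α j0 * w)
    by_cases hij : i = j0
    · subst hij; exact hi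
    · exfalso
      have hi' : α j0 * w * (α i)⁻¹ ∈ H i := hi
      have hmem : α j0 * (α i)⁻¹ ∈ H i := by
        have := mul_mem hi' (inv_mem (hgood i hij))
        have e : α j0 * w * (α i)⁻¹ * (α i * w * (α i)⁻¹)⁻¹ = α j0 * (α i)⁻¹ := by
          group
        rwa [e] at this
      have h1 : α j0 ∈ rcoset (H i) (α i) := hmem
      have h2 : α j0 ∈ rcoset (H j0) (α j0) := by
        show α j0 * (α j0)⁻¹ ∈ H j0
        simpa using (H j0).one_mem
      obtain ⟨i', -, hu⟩ := hpart (α j0)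
      exact hij ((hu i h1).trans (hu j0 h2).symm)
  -- both j and k are bad for w
  have badj : α j * w * (α j)⁻¹ ∉ H j := by
    intro hj
    have hk : α k * w * (α k)⁻¹ ∈ H k := by
      apply L1 k
      intro i hik
      by_cases hij : i = j
      · subst hij; exact hj
      · exact hwB i hij hik
    apply hwA
    intro i
    by_cases hij : i = j
    · subst hij; exact hj
    by_cases hik : i = k
    · subst hik; exact hk
    exact hwB i hij hik
  have badk : α k * w * (α k)⁻¹ ∉ H k := by
    intro hk
    have hj : α j * w * (α j)⁻¹ ∈ H j := by
      apply L1 j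
      intro i hij
      by_cases hik : i = k
      · subst hik; exact hk
      · exact hwB i hij hik
    apply hwA
    intro i
    by_cases hij : i = j
    · subst hij; exact hj
    by_cases hik : i = k
    · subst hik; exact hk
    exact hwB i hij hik
  -- L2: H j0 ≤ H k0
  have L2 : ∀ j0 k0 : Fin s, j0 ≠ k0 →
      (∀ i, i ≠ j0 → i ≠ k0 → α i * w * (α i)⁻¹ ∈ H i) →
      α j0 * w * (α j0)⁻¹ ∉ H j0 → H j0 ≤ H k0 := by
    intro j0 k0 hne hgood hbad
    have step : ∀ x : G, x * (α j0)⁻¹ ∈ H j0 → x * w * (α k0)⁻¹ ∈ H k0 := by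
      intro x hx
      obtain ⟨i, hi, -⟩ := hpart (x * w)
      by_cases hik : i = k0
      · subst hik; exact hi
      · exfalso
        by_cases hij : i = j0
        · subst hij
          have hi' : x * w * (α i)⁻¹ ∈ H i := hi
          apply hbad
          have := mul_mem (inv_mem hx) hi'
          have e : (x * (α i)⁻¹)⁻¹ * (x * w * (α i)⁻¹) = α i * w * (α i)⁻¹ := by
            group
          rwa [e] at this
        · have hi' : x * w * (α i)⁻¹ ∈ H i := hi
          have hmem : x * (α i)⁻¹ ∈ H i := by
            have := mul_mem hi' (inv_mem (hgood i hij hik))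
            have e : x * w * (α i)⁻¹ * (α i * w * (α i)⁻¹)⁻¹ = x * (α i)⁻¹ := by
              group
            rwa [e] at this
          obtain ⟨i', -, hu⟩ := hpart x
          exact hij ((hu i hmem).trans (hu j0 hx).symm)
    have hc : α j0 * w * (α k0)⁻¹ ∈ H k0 := by
      apply step
      simpa using (H j0).one_mem
    intro h hh
    have h2 : h * α j0 * w * (α k0)⁻¹ ∈ H k0 := by
      apply step
      have e : h * α j0 * (α j0)⁻¹ = h := by group
      rwa [e]
    have := mul_mem h2 (inv_mem hc)
    have e : h * α j0 * w * (α k0)⁻¹ * (α j0 * w * (α k0)⁻¹)⁻¹ = h := by group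
    rwa [e] at this
  exact le_antisymm (L2 j k hjk (fun i h1 h2 => hwB i h1 h2) badj)
    (L2 k j hjk.symm (fun i h1 h2 => hwB i h2 h1) badk)
end

section
/- Under the hypotheses of the previous theorem, the witness element w ∈ (⋂_{i≠j,k} α_i^{-1}H_i α_i) \ (⋂_{i=1}^s α_i^{-1}H_i α_i) satisfies: H_j α_j w = H_k α_k, H_k α_k w = H_j α_j, and w^2 ∈ ⋂_{i=1}^s α_i^{-1} H_i α_i. -/
/-- The witness `w ∈ (⋂_{i≠j,k} α_i⁻¹H_iα_i) \ (⋂_i α_i⁻¹H_iα_i)` satisfies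
`H_jα_jw = H_kα_k`, `H_kα_kw = H_jα_j`, and `w² ∈ ⋂_i α_i⁻¹H_iα_i`. -/
theorem witness_swaps_cosets (G : Type*) [Group G] {s : ℕ}
    (H : Fin s → Subgroup G) (α : Fin s → G)
    (hfi : ∀ i, (H i).FiniteIndex) (hd : ∀ i, 1 < (H i).index)
    (hpart : IsCosetPartition H α) (j k : Fin s) (hjk : j ≠ k) (w : G)
    (hw1 : ∀ i, i ≠ j → i ≠ k → α i * w * (α i)⁻¹ ∈ H i)
    (hw2 : ¬(α j * w * (α j)⁻¹ ∈ H j ∧ α k * w * (α k)⁻¹ ∈ H k)) :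
    rcoset (H j) (α j * w) = rcoset (H k) (α k) ∧
    rcoset (H k) (α k * w) = rcoset (H j) (α j) ∧
    ∀ i, α i * w ^ 2 * (α i)⁻¹ ∈ H i := by
  have self_mem : ∀ i, α i ∈ rcoset (H i) (α i) := by
    intro i; show α i * (α i)⁻¹ ∈ H i; simp
  have uniq : ∀ (g : G) (i i' : Fin s), g ∈ rcoset (H i) (α i) →
      g ∈ rcoset (H i') (α i') → i = i' := by
    intro g i i' h h'
    obtain ⟨m, _, hu⟩ := hpart g
    rw [hu i h, hu i' h']
  have shift : ∀ (i : Fin s) (g : G), α i * w * (α i)⁻¹ ∈ H i →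
      (g * w ∈ rcoset (H i) (α i) ↔ g ∈ rcoset (H i) (α i)) := by
    intro i g hi
    show g * w * (α i)⁻¹ ∈ H i ↔ g * (α i)⁻¹ ∈ H i
    have h1 : g * w * (α i)⁻¹ = g * (α i)⁻¹ * (α i * w * (α i)⁻¹) := by group
    rw [h1, mul_mem_cancel_right hi]
  -- If the conjugation condition holds for all i ≠ b, it holds for b too
  have key : ∀ b : Fin s, (∀ i, i ≠ b → α i * w * (α i)⁻¹ ∈ H i) →
      α b * w * (α b)⁻¹ ∈ H b := by
    intro b hb
    obtain ⟨i, hi, -⟩ := hpart (α b * w)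
    by_cases hib : i = b
    · subst hib; exact hi
    · have h2 : α b ∈ rcoset (H i) (α i) := (shift i (α b) (hb i hib)).mp hi
      exact absurd (uniq (α b) i b h2 (self_mem b)) hib
  have hnj : ¬ α j * w * (α j)⁻¹ ∈ H j := by
    intro h
    refine hw2 ⟨h, key k ?_⟩
    intro i hik
    by_cases hij : i = j
    · subst hij; exact h
    · exact hw1 i hij hik
  have hnk : ¬ α k * w * (α k)⁻¹ ∈ H k := by
    intro h
    refine hw2 ⟨key j ?_, h⟩
    intro i hij
    by_cases hik : i = k
    · subst hik; exact h
    · exact hw1 i hij hik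
  have main : ∀ (a b : Fin s), ¬ α a * w * (α a)⁻¹ ∈ H a → ¬ α b * w * (α b)⁻¹ ∈ H b →
      (∀ i, i ≠ a → i ≠ b → α i * w * (α i)⁻¹ ∈ H i) →
      ∀ g : G, g * w⁻¹ ∈ rcoset (H a) (α a) ↔ g ∈ rcoset (H b) (α b) := by
    intro a b hna hnb hi g
    constructor
    · intro hg
      obtain ⟨i, hgi, -⟩ := hpart g
      by_cases hia : i = a
      · subst hia
        exfalso
        apply hna
        have h1 : g * w⁻¹ * (α i)⁻¹ ∈ H i := hg
        have h2 : g * (α i)⁻¹ ∈ H i := hgi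
        have h3 := mul_mem (inv_mem h1) h2
        have h4 : (g * w⁻¹ * (α i)⁻¹)⁻¹ * (g * (α i)⁻¹) = α i * w * (α i)⁻¹ := by group
        rwa [h4] at h3
      by_cases hib : i = b
      · subst hib; exact hgi
      · have h1 : g * w⁻¹ * w ∈ rcoset (H i) (α i) := by simpa using hgi
        have h2 : g * w⁻¹ ∈ rcoset (H i) (α i) := (shift i (g * w⁻¹) (hi i hia hib)).mp h1
        exact absurd (uniq (g * w⁻¹) i a h2 hg) hia
    · intro hg
      obtain ⟨i, hgi, -⟩ := hpart (g * w⁻¹)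
      by_cases hib : i = b
      · subst hib
        exfalso
        apply hnb
        have h1 : g * w⁻¹ * (α i)⁻¹ ∈ H i := hgi
        have h2 : g * (α i)⁻¹ ∈ H i := hg
        have h3 := mul_mem (inv_mem h1) h2
        have h4 : (g * w⁻¹ * (α i)⁻¹)⁻¹ * (g * (α i)⁻¹) = α i * w * (α i)⁻¹ := by group
        rwa [h4] at h3
      by_cases hia : i = a
      · subst hia; exact hgi
      · have h1 : g ∈ rcoset (H i) (α i) := by
          simpa using (shift i (g * w⁻¹) (hi i hia hib)).mpr hgi
        exact absurd (uniq g i b h1 hg) hib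
  have mainjk := main j k hnj hnk hw1
  have mainkj := main k j hnk hnj (fun i hik hij => hw1 i hij hik)
  have eq1 : rcoset (H j) (α j * w) = rcoset (H k) (α k) := by
    ext g
    have : g ∈ rcoset (H j) (α j * w) ↔ g * w⁻¹ ∈ rcoset (H j) (α j) := by
      show g * (α j * w)⁻¹ ∈ H j ↔ g * w⁻¹ * (α j)⁻¹ ∈ H j
      rw [mul_inv_rev, mul_assoc]
    rw [this, mainjk g]
  have eq2 : rcoset (H k) (α k * w) = rcoset (H j) (α j) := by
    ext g
    have : g ∈ rcoset (H k) (α k * w) ↔ g * w⁻¹ ∈ rcoset (H k) (α k) := by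
      show g * (α k * w)⁻¹ ∈ H k ↔ g * w⁻¹ * (α k)⁻¹ ∈ H k
      rw [mul_inv_rev, mul_assoc]
    rw [this, mainkj g]
  refine ⟨eq1, eq2, fun i => ?_⟩
  by_cases hij : i = j
  · subst hij
    have h1 : α i * w ∈ rcoset (H k) (α k) := by
      rw [← eq1]
      show α i * w * (α i * w)⁻¹ ∈ H i
      have e : α i * w * (α i * w)⁻¹ = 1 := by group
      rw [e]; exact one_mem _
    have h2 : α i * w ^ 2 ∈ rcoset (H i) (α i) := by
      rw [← (mainkj (α i * w ^ 2))]
      have : α i * w ^ 2 * w⁻¹ = α i * w := by group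
      rwa [this]
    exact h2
  by_cases hik : i = k
  · subst hik
    have h1 : α i * w ∈ rcoset (H j) (α j) := by
      rw [← eq2]
      show α i * w * (α i * w)⁻¹ ∈ H i
      have e : α i * w * (α i * w)⁻¹ = 1 := by group
      rw [e]; exact one_mem _
    have h2 : α i * w ^ 2 ∈ rcoset (H i) (α i) := by
      rw [← (mainjk (α i * w ^ 2))]
      have : α i * w ^ 2 * w⁻¹ = α i * w := by group
      rwa [this]
    exact h2
  · have h := mul_mem (hw1 i hij hik) (hw1 i hij hik)
    have h4 : (α i * w * (α i)⁻¹) * (α i * w * (α i)⁻¹) = α i * w ^ 2 * (α i)⁻¹ := by rw [pow_two]; group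
    rwa [h4] at h
end

section
/- The metric space Y of coset partitions of F_n with the metric ρ is not uniformly discrete: for every ε > 0 there exist distinct points P ≠ P' in Y with ρ(P,P') ≤ ε. -/
/-- A point of the space `Y`: a tuple `(H_s, ..., H_1)` of finite-index subgroups, ordered
by nonincreasing index, arising from some coset partition of the group. -/
def IsPartitionTuple {G : Type*} [Group G] (L : List (Subgroup G)) : Prop :=
  L.Pairwise (fun H K => K.index ≤ H.index) ∧
  (∀ H ∈ L, H.FiniteIndex ∧ 1 < H.index) ∧
  ∃ α : Fin L.length → G, IsCosetPartition (fun i => L.get i) α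

open Classical in
/-- First position (counting from 1) at which two lists disagree. -/
noncomputable def firstDiff {α : Type*} : List α → List α → ℕ
  | a :: P, b :: P' => if a = b then firstDiff P P' + 1 else 1
  | _, _ => 1

open Classical in
/-- The metric `ρ(P,P') = 2^{-k}`, `k` the first place of disagreement, `0` if equal. -/
noncomputable def pdist {α : Type*} (P P' : List α) : ℝ :=
  if P = P' then 0 else (2 : ℝ)⁻¹ ^ firstDiff P P'

theorem Int.existsUnique_modEq_add_mul {d k : ℕ} (hd : 0 < d) (hk : 0 < k) {z r : ℤ}
    (h : z ≡ r [ZMOD d]) : ∃! j : Fin k, z ≡ r + d * j [ZMOD d * k] := by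
  refine existsUnique_of_exists_of_unique ?_ fun j j' hj hj' => ?_
  · obtain ⟨c, hc⟩ := h.symm.dvd
    have hk' : (0 : ℤ) < k := by exact_mod_cast hk
    refine ⟨⟨(c % k).toNat, by have := Int.emod_lt_of_pos c hk'; omega⟩, ?_⟩
    rw [Int.modEq_iff_dvd]
    refine ⟨-(c / k), ?_⟩
    simp only [Int.toNat_of_nonneg (Int.emod_nonneg c hk'.ne')]
    have := Int.mul_ediv_add_emod c k
    linear_combination -hc + (d : ℤ) * this
  · have hdj : (d : ℤ) * j ≡ d * j' [ZMOD d * k] :=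
      Int.ModEq.add_left_cancel' r (hj.symm.trans hj')
    have hjj' : (j : ℕ) ≡ j' [MOD k] :=
      Int.natCast_modEq_iff.mp (hdj.mul_left_cancel' (by exact_mod_cast hd.ne'))
    exact Fin.ext (hjj'.eq_of_lt_of_lt j.isLt j'.isLt)

open Multiplicative

section

variable {G : Type*} [Group G]

def IsCosetCover {s : ℕ} (H : Fin s → Subgroup G) (α : Fin s → G) (S : Set G) : Prop :=
  (∀ i, rcoset (H i) (α i) ⊆ S) ∧ ∀ g ∈ S, ∃! i, g ∈ rcoset (H i) (α i)

theorem isCosetPartition_iff_isCosetCover_univ {s : ℕ} (H : Fin s → Subgroup G)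
    (α : Fin s → G) :
    IsCosetPartition H α ↔ IsCosetCover H α Set.univ := by
  simp [IsCosetPartition, IsCosetCover]

theorem IsCosetCover.append {s t : ℕ} {H₁ : Fin s → Subgroup G} {α₁ : Fin s → G}
    {H₂ : Fin t → Subgroup G} {α₂ : Fin t → G} {S T : Set G}
    (h₁ : IsCosetCover H₁ α₁ S) (h₂ : IsCosetCover H₂ α₂ T) (hST : Disjoint S T) :
    IsCosetCover (Fin.append H₁ H₂) (Fin.append α₁ α₂) (S ∪ T) := by
  refine ⟨fun i => ?_, fun g hg => ?_⟩
  · refine Fin.addCases (fun i => ?_) (fun i => ?_) i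
    · simpa using (h₁.1 i).trans Set.subset_union_left
    · simpa using (h₂.1 i).trans Set.subset_union_right
  · rcases hg with hg | hg
    · obtain ⟨i, hi, hu⟩ := h₁.2 g hg
      refine ⟨Fin.castAdd t i, by simpa using hi, fun j hj => ?_⟩
      induction j using Fin.addCases with
      | left j => simp only [Fin.append_left] at hj; rw [hu j hj]
      | right j =>
        simp only [Fin.append_right] at hj
        exact (Set.disjoint_left.mp hST hg (h₂.1 j hj)).elim
    · obtain ⟨i, hi, hu⟩ := h₂.2 g hg
      refine ⟨Fin.natAdd s i, by simpa using hi, fun j hj => ?_⟩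
      induction j using Fin.addCases with
      | left j =>
        simp only [Fin.append_left] at hj
        exact (Set.disjoint_left.mp hST (h₁.1 j hj) hg).elim
      | right j => simp only [Fin.append_right] at hj; rw [hu j hj]

theorem IsCosetPartition.comp_cast {s t : ℕ} {H : Fin s → Subgroup G} {α : Fin s → G}
    (h : IsCosetPartition H α) (e : t = s) :
    IsCosetPartition (H ∘ Fin.cast e) (α ∘ Fin.cast e) := by
  intro g
  obtain ⟨i, hi, hu⟩ := h g
  refine ⟨Fin.cast e.symm i, by simpa using hi, fun j hj => ?_⟩
  rw [← hu _ hj]; simp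

theorem isPartitionTuple_ofFn {s : ℕ} {H : Fin s → Subgroup G} {α : Fin s → G}
    (hanti : ∀ i j, i < j → (H j).index ≤ (H i).index)
    (hidx : ∀ i, (H i).FiniteIndex ∧ 1 < (H i).index) (h : IsCosetPartition H α) :
    IsPartitionTuple (List.ofFn H) := by
  refine ⟨List.pairwise_ofFn.mpr hanti, by simpa using hidx, α ∘ Fin.cast (by simp), ?_⟩
  have hget : (fun i => (List.ofFn H).get i) = H ∘ Fin.cast (by simp) :=
    funext (List.get_ofFn H)
  rw [hget]
  exact h.comp_cast _

def modSubgroup (v : G →* Multiplicative ℤ) (e : ℕ) : Subgroup G :=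
  (AddSubgroup.zmultiples (e : ℤ)).toSubgroup.comap v

section

variable {v : G →* Multiplicative ℤ} {x : G}

theorem mem_rcoset_modSubgroup (hx : v x = ofAdd 1) (e : ℕ) (r : ℤ) (g : G) :
    g ∈ rcoset (modSubgroup v e) (x ^ r) ↔ toAdd (v g) ≡ r [ZMOD e] := by
  have hxr : toAdd (v (x ^ r)) = r := by simp [map_zpow, hx]
  simp only [rcoset, modSubgroup, Set.mem_ofPred_eq, Subgroup.mem_comap,
    Multiplicative.mem_toSubgroup, Int.mem_zmultiples_iff, map_mul, map_inv, toAdd_mul, toAdd_inv,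
    hxr, ← sub_eq_add_neg]
  exact Int.modEq_iff_dvd.symm.trans Int.modEq_comm

theorem index_modSubgroup (hx : v x = ofAdd 1) (e : ℕ) : (modSubgroup v e).index = e := by
  have hv : Function.Surjective v := fun y =>
    ⟨x ^ toAdd y, toAdd.injective (by simp [map_zpow, hx])⟩
  rw [modSubgroup, Subgroup.index_comap_of_surjective _ hv, AddSubgroup.index_toSubgroup,
    Int.index_zmultiples, Int.natAbs_natCast]

theorem isCosetCover_modSubgroup (hx : v x = ofAdd 1) {d k : ℕ} (hd : 0 < d) (hk : 0 < k)
    (r : ℤ) :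
    IsCosetCover (fun _ : Fin k => modSubgroup v (d * k)) (fun j => x ^ (r + d * j))
      {g | toAdd (v g) ≡ r [ZMOD d]} := by
  refine ⟨fun j g hg => ?_, fun g hg => ?_⟩
  · rw [mem_rcoset_modSubgroup hx, Nat.cast_mul] at hg
    have hrj : r + d * j ≡ r [ZMOD d] := Int.modEq_iff_dvd.mpr ⟨-j, by ring⟩
    exact (Int.ModEq.of_mul_right _ hg).trans hrj
  · simp only [mem_rcoset_modSubgroup hx, Nat.cast_mul]
    exact Int.existsUnique_modEq_add_mul hd hk hg

theorem isPartitionTuple_replicate_append (hx : v x = ofAdd 1) {m k : ℕ} (hk : 0 < k)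
    (hkm : k ≤ m) :
    IsPartitionTuple
      (List.replicate m (modSubgroup v (2 * m)) ++ List.replicate k (modSubgroup v (2 * k))) := by
  have hunion : {g : G | toAdd (v g) ≡ 1 [ZMOD (2 : ℕ)]} ∪ {g | toAdd (v g) ≡ 0 [ZMOD (2 : ℕ)]} =
      Set.univ :=
    Set.eq_univ_of_forall fun g => (Int.emod_two_eq_zero_or_one (toAdd (v g))).symm
  have hdisj : Disjoint {g : G | toAdd (v g) ≡ 1 [ZMOD (2 : ℕ)]}
      {g | toAdd (v g) ≡ 0 [ZMOD (2 : ℕ)]} := by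
    refine Set.disjoint_left.mpr fun g h₁ h₀ => ?_
    simp only [Set.mem_ofPred_eq, Int.ModEq] at h₁ h₀
    omega
  have hpart := (isCosetCover_modSubgroup hx two_pos (hk.trans_le hkm) 1).append
    (isCosetCover_modSubgroup hx two_pos hk 0) hdisj
  rw [hunion, ← isCosetPartition_iff_isCosetCover_univ] at hpart
  rw [← List.ofFn_const, ← List.ofFn_const, ← List.ofFn_fin_append]
  refine isPartitionTuple_ofFn (fun i j hij => ?_) (fun i => ?_) hpart
  · rw [Fin.lt_def] at hij
    induction i using Fin.addCases <;> induction j using Fin.addCases <;>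
      simp only [Fin.val_castAdd, Fin.val_natAdd, Fin.append_left, Fin.append_right,
        index_modSubgroup hx] at hij ⊢ <;> omega
  · induction i using Fin.addCases <;>
      simp only [Fin.append_left, Fin.append_right, Subgroup.finiteIndex_iff,
        index_modSubgroup hx] <;> omega

end

end

theorem firstDiff_pos {α : Type*} (l l' : List α) : 0 < firstDiff l l' := by
  cases l <;> cases l' <;> unfold firstDiff <;> first | omega | (split <;> omega)

theorem length_lt_firstDiff_append {α : Type*} (l₀ l l' : List α) :
    l₀.length < firstDiff (l₀ ++ l) (l₀ ++ l') := by
  induction l₀ with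
  | nil => exact firstDiff_pos l l'
  | cons a l₀ ih => simpa [firstDiff] using ih

theorem pdist_append_le {α : Type*} (l₀ l l' : List α) :
    pdist (l₀ ++ l) (l₀ ++ l') ≤ (2 : ℝ)⁻¹ ^ l₀.length := by
  unfold pdist
  split_ifs
  · positivity
  · exact pow_le_pow_of_le_one (by norm_num) (by norm_num) (length_lt_firstDiff_append _ _ _).le

/-- `Y` is not uniformly discrete: for every `ε > 0` there are distinct partition tuples
at distance at most `ε`. -/
theorem not_uniformly_discrete (n : ℕ) (hn : 2 ≤ n) (ε : ℝ) (hε : 0 < ε) :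
    ∃ P P' : List (Subgroup (FreeGroup (Fin n))),
      IsPartitionTuple P ∧ IsPartitionTuple P' ∧ P ≠ P' ∧ pdist P P' ≤ ε := by
  obtain ⟨k, hk⟩ := exists_pow_lt_of_lt_one hε (by norm_num : (2 : ℝ)⁻¹ < 1)
  let v : FreeGroup (Fin n) →* Multiplicative ℤ := FreeGroup.lift fun _ => ofAdd 1
  have hx : v (FreeGroup.of ⟨0, by omega⟩) = ofAdd 1 := FreeGroup.lift_apply_of
  let A := List.replicate (k + 2) (modSubgroup v (2 * (k + 2)))
  refine ⟨A ++ List.replicate 1 (modSubgroup v (2 * 1)),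
    A ++ List.replicate 2 (modSubgroup v (2 * 2)),
    isPartitionTuple_replicate_append hx one_pos (by omega),
    isPartitionTuple_replicate_append hx two_pos (by omega), by simp [A], ?_⟩
  calc pdist _ _ ≤ (2 : ℝ)⁻¹ ^ (k + 2) := by simpa [A] using pdist_append_le A _ _
    _ ≤ (2 : ℝ)⁻¹ ^ k := pow_le_pow_of_le_one (by norm_num) (by norm_num) (by omega)
    _ ≤ ε := hk.le
end

section
/- Let P_0 = {H_i α_i}_{i=1}^s and P = {K_i β_i}_{i=1}^t be coset partitions of F_n (subgroups ordered by nonincreasing index) with ρ(P,P_0) < 2^{-(r+1)}, 2 ≤ r ≤ min(s,t)-1. If P_0 has multiplicity witnessed among its top r+1 indices (d_{H_{s-i}} = d_{H_{s-j}} for some 0 ≤ i < j ≤ r), then P has multiplicity. -/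
theorem getElem?_eq_of_lt_firstDiff {α : Type*} :
    ∀ (P P' : List α) (k : ℕ), k + 1 < firstDiff P P' → P[k]? = P'[k]?
  | a :: P, b :: P', k, h => by
    classical
    by_cases hab : a = b
    · rw [firstDiff, if_pos hab] at h
      cases k with
      | zero => simp [hab]
      | succ k => exact getElem?_eq_of_lt_firstDiff P P' k (by omega)
    · rw [firstDiff, if_neg hab] at h
      omega
  | [], [], _, _ => rfl
  | [], _ :: _, _, h | _ :: _, [], _, h => by
    unfold firstDiff at h
    omega

theorem getElem?_eq_of_pdist_lt {α : Type*} {P P' : List α} {r : ℕ}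
    (h : pdist P P' < (2 : ℝ)⁻¹ ^ (r + 1)) {k : ℕ} (hk : k ≤ r) : P[k]? = P'[k]? := by
  by_cases hPP' : P = P'
  · rw [hPP']
  · rw [pdist, if_neg hPP', pow_lt_pow_iff_right_of_lt_one₀ (by norm_num) (by norm_num)] at h
    exact getElem?_eq_of_lt_firstDiff P P' k (by omega)

theorem exists_ne_eq_of_getElem?_map_eq {α β : Type*} {L : List α} (f : α → β) {i j : ℕ}
    (hij : i < j) (hj : j < L.length) (h : L[i]?.map f = L[j]?.map f) :
    ∃ a b : Fin L.length, a ≠ b ∧ f (L.get a) = f (L.get b) := by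
  have hi : i < L.length := hij.trans hj
  rw [List.getElem?_eq_getElem hi, List.getElem?_eq_getElem hj] at h
  exact ⟨⟨i, hi⟩, ⟨j, hj⟩, fun h' => hij.ne (Fin.mk.inj h'), Option.some.inj h⟩

theorem multiplicity_stable_general (n : ℕ)
    (P₀ P : List (Subgroup (FreeGroup (Fin n))))
    (r : ℕ) (hrt : r + 1 ≤ P.length)
    (hclose : pdist P P₀ < (2 : ℝ)⁻¹ ^ (r + 1))
    (hmult : ∃ i j, i < j ∧ j ≤ r ∧
      (P₀[i]?.map Subgroup.index) = (P₀[j]?.map Subgroup.index)) :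
    ∃ i j : Fin P.length, i ≠ j ∧ (P.get i).index = (P.get j).index := by
  obtain ⟨i, j, hij, hjr, hind⟩ := hmult
  have hagree : P[i]?.map Subgroup.index = P[j]?.map Subgroup.index := by
    rw [getElem?_eq_of_pdist_lt hclose (hij.le.trans hjr), getElem?_eq_of_pdist_lt hclose hjr,
      hind]
  exact exists_ne_eq_of_getElem?_map_eq Subgroup.index hij (by omega) hagree

/-- If `ρ(P,P₀) < 2^{-(r+1)}` and `P₀` has multiplicity witnessed among its top `r+1`
indices, then `P` has multiplicity. -/
theorem multiplicity_stable (n : ℕ) (hn : 2 ≤ n)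
    (P₀ P : List (Subgroup (FreeGroup (Fin n))))
    (hP₀ : IsPartitionTuple P₀) (hP : IsPartitionTuple P)
    (r : ℕ) (hr : 2 ≤ r) (hrs : r + 1 ≤ P₀.length) (hrt : r + 1 ≤ P.length)
    (hclose : pdist P P₀ < (2 : ℝ)⁻¹ ^ (r + 1))
    (hmult : ∃ i j, i < j ∧ j ≤ r ∧
      (P₀[i]?.map Subgroup.index) = (P₀[j]?.map Subgroup.index)) :
    ∃ i j : Fin P.length, i ≠ j ∧ (P.get i).index = (P.get j).index :=
  multiplicity_stable_general n P₀ P r hrt hclose hmult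
end
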